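/- dynA* with a dyn-admissible dynamic heuristic returns optimal solutions: any path it returns is a solution whose cost equals h*(s_I), the minimum cost of any solution. -/

import Mathlib

open scoped ENNReal Classical

/-! ## Transition systems -/

/-- A labeled transition: (origin, label, target). -/
abbrev Tran (S L : Type) := S × L × S

/-- A transition system with states `S`, labels `L`, a cost function,
a set of labeled transitions, an initial state and a set of goal states. -/
structure TransSys (S L : Type) where
  cost : L → NNReal
  trans : Set (Tran S L)
  init : S
  goal : Set S

namespace TransSys

variable {S L : Type}

/-- `IsPathFrom ts s π s'`: `π` is a path from `s` to `s'` in `ts`. -/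
inductive IsPathFrom (ts : TransSys S L) : S → List (Tran S L) → S → Prop
  | nil (s : S) : IsPathFrom ts s [] s
  | cons {s m e : S} {l : L} {π : List (Tran S L)} :
      (s, l, m) ∈ ts.trans → IsPathFrom ts m π e → IsPathFrom ts s ((s, l, m) :: π) e

/-- The cost of a path: sum of the costs of its labels. -/
def pathCost (ts : TransSys S L) (π : List (Tran S L)) : NNReal :=
  (π.map fun t => ts.cost t.2.1).sum

/-- A state is reachable if there is a path from the initial state to it. -/
def Reachable (ts : TransSys S L) (s : S) : Prop := ∃ π, ts.IsPathFrom ts.init π s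

/-- A solution is a path from the initial state to a goal state. -/
def Solution (ts : TransSys S L) (π : List (Tran S L)) : Prop :=
  ∃ s ∈ ts.goal, ts.IsPathFrom ts.init π s

def Solvable (ts : TransSys S L) : Prop := ∃ π, ts.Solution π

/-- `h*`: minimal cost of a path from `s` to a goal state (`∞` if none exists). -/
noncomputable def hstar (ts : TransSys S L) (s : S) : ℝ≥0∞ :=
  sInf {x : ℝ≥0∞ | ∃ π, ∃ g ∈ ts.goal, ts.IsPathFrom s π g ∧ x = (ts.pathCost π : ℝ≥0∞)}

/-- `g*`: minimal cost of a path from the initial state to `s` (`∞` if none exists). -/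
noncomputable def gstar (ts : TransSys S L) (s : S) : ℝ≥0∞ :=
  sInf {x : ℝ≥0∞ | ∃ π, ts.IsPathFrom ts.init π s ∧ x = (ts.pathCost π : ℝ≥0∞)}

end TransSys

/-! ## Information sources and dynamic heuristics -/

/-- An information source for a transition system (Definition 1). -/
structure InfoSource {S L : Type} (ts : TransSys S L) (I : Type) where
  initInfo : I
  update : I → Tran S L → I
  refine : I → S → I

namespace InfoSource

variable {S L I : Type} {ts : TransSys S L}

/-- `ReachWith σ i K`: information object `i` is obtained from the initial
information by updates/refinements, where `K` is the set consisting of the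
initial state together with all targets of used transitions, every refined state
lies in `K`, and the origin of every used transition lies in `K` (Definition 2). -/
inductive ReachWith (σ : InfoSource ts I) : I → Set S → Prop
  | base : ReachWith σ σ.initInfo {ts.init}
  | update {i : I} {K : Set S} {t : Tran S L} :
      ReachWith σ i K → t ∈ ts.trans → t.1 ∈ K →
      ReachWith σ (σ.update i t) (insert t.2.2 K)
  | refine {i : I} {K : Set S} {s : S} :
      ReachWith σ i K → s ∈ K → ReachWith σ (σ.refine i s) K

/-- An information object is reachable (Definition 2). -/
def ReachableInfo (σ : InfoSource ts I) (i : I) : Prop := ∃ K, σ.ReachWith i K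

end InfoSource

section HeuristicProps

variable {S L I : Type} (ts : TransSys S L) (σ : InfoSource ts I) (h : S → I → ℝ≥0∞)

def DynSafe : Prop := ∀ (s : S) (i : I), σ.ReachableInfo i → h s i = ⊤ → ts.hstar s = ⊤

def DynAdmissible : Prop := ∀ (s : S) (i : I), σ.ReachableInfo i → h s i ≤ ts.hstar s

def DynConsistent : Prop :=
  ∀ t ∈ ts.trans, ∀ i : I, σ.ReachableInfo i →
    h t.1 i ≤ (ts.cost t.2.1 : ℝ≥0∞) + h t.2.2 i

def DynGoalAware : Prop := ∀ s ∈ ts.goal, ∀ i : I, σ.ReachableInfo i → h s i = 0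

def DynMonotonic : Prop :=
  ∀ i : I, σ.ReachableInfo i →
    (∀ s : S, ∀ t ∈ ts.trans, h s i ≤ h s (σ.update i t)) ∧
    (∀ s s' : S, h s i ≤ h s (σ.refine i s'))

end HeuristicProps

/-! ## Progression sources -/

/-- A progression source (Definition 5). -/
structure ProgSource {S L : Type} (ts : TransSys S L) (J : Type) where
  initJ : J
  progress : J → Tran S L → J
  merge : J → J → J

/-- The progression-based information source built on a progression source
(Definition 7): per-state information, updated by progressing along a
transition and merging with existing information at the target. -/
noncomputable def progInfoSource {S L J : Type} (ts : TransSys S L) (p : ProgSource ts J) :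
    InfoSource ts (S → Option J) where
  initInfo := fun x => if x = ts.init then some p.initJ else none
  update := fun i t => fun x =>
    if x = t.2.2 then
      match i t.1 with
      | none => i t.2.2
      | some j =>
        match i t.2.2 with
        | none => some (p.progress j t)
        | some j' => some (p.merge (p.progress j t) j')
    else i x
  refine := fun i _ => i

/-- The parent source (Definition 6): per-state `g`-values and parent pointers. -/
noncomputable def parentSource {S L : Type} (ts : TransSys S L) :
    ProgSource ts (NNReal × Option (Tran S L)) where
  initJ := (0, none)
  progress := fun j t => (j.1 + ts.cost t.2.1, some t)
  merge := fun a b => if a.1 ≤ b.1 then a else b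

/-- `ParentChain par s π`: `π` is the sequence of transitions obtained by
following parent pointers backwards from `s` until a state whose stored
pointer is `⊥` (read forwards). -/
inductive ParentChain {S L : Type} (par : S → Option (NNReal × Option (Tran S L))) :
    S → List (Tran S L) → Prop
  | nil {s : S} {g : NNReal} : par s = some (g, none) → ParentChain par s []
  | cons {g : NNReal} {t : Tran S L} {π : List (Tran S L)} :
      par t.2.2 = some (g, some t) → ParentChain par t.1 π →
      ParentChain par t.2.2 (π ++ [t])

/-! ## The dynamic heuristic search framework (Algorithm 1) -/

/-- A configuration of the framework: the known states and one information
object per information source. -/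
structure FConfig (S : Type) {ι : Type} (I : ι → Type) where
  known : Set S
  infos : ∀ k, I k

/-- The (non-terminating) operations of the framework. -/
inductive FOp where
  | genUnknown
  | genKnown
  | refineOp
deriving DecidableEq

section Framework

variable {S L ι : Type} {I : ι → Type} (ts : TransSys S L) (σ : ∀ k, InfoSource ts (I k))

/-- One step of the framework, labeled by the operation performed. -/
inductive FStep : FConfig S I → FOp → FConfig S I → Prop
  | genUnknown {c : FConfig S I} {t : Tran S L} :
      t ∈ ts.trans → t.1 ∈ c.known → t.2.2 ∉ c.known →
      FStep c .genUnknown ⟨insert t.2.2 c.known, fun k => (σ k).update (c.infos k) t⟩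
  | genKnown {c : FConfig S I} {t : Tran S L} :
      t ∈ ts.trans → t.1 ∈ c.known → t.2.2 ∈ c.known →
      FStep c .genKnown ⟨c.known, fun k => (σ k).update (c.infos k) t⟩
  | refineStep {c : FConfig S I} {s : S} :
      s ∈ c.known →
      FStep c .refineOp ⟨c.known, fun k => (σ k).refine (c.infos k) s⟩

/-- The initial configuration of the framework. -/
def initFConfig : FConfig S I := ⟨{ts.init}, fun k => (σ k).initInfo⟩

/-- A configuration occurring in some finite execution of the framework. -/
def FReach (c : FConfig S I) : Prop :=
  Relation.ReflTransGen (fun a b => ∃ op, FStep ts σ a op b) (initFConfig ts σ) c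

/-- Applicability of the gen-unknown operation. -/
def GenUnknownApp (c : FConfig S I) : Prop :=
  ∃ t ∈ ts.trans, t.1 ∈ c.known ∧ t.2.2 ∉ c.known

/-- Applicability of decl-solvable: a goal state is known. -/
def DeclSolvableApp (c : FConfig S I) : Prop := ∃ s ∈ c.known, s ∈ ts.goal

/-- Applicability of decl-unsolvable: no goal state is known and
no transition leaves the known states. -/
def DeclUnsolvableApp (c : FConfig S I) : Prop :=
  (∀ s ∈ c.known, s ∉ ts.goal) ∧ ¬ GenUnknownApp ts c

end Framework

/-! ## dynA* (Algorithm 2) -/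

/-- An open-list entry: (state, g-entry, h-entry). -/
abbrev Entry (S : Type) := S × NNReal × ℝ≥0∞

/-- The f-value of an open-list entry. -/
noncomputable def fval {S : Type} (en : Entry S) : ℝ≥0∞ := (en.2.1 : ℝ≥0∞) + en.2.2

/-- A configuration of dynA*: known states, closed set, open queue, the parent
information (g-values and parent pointers, i.e. the information of σ_p) and the
information object of the heuristic's source σ_h. -/
structure AConfig (S L I : Type) where
  known : Set S
  closed : Set S
  openq : Multiset (Entry S)
  par : S → Option (NNReal × Option (Tran S L))
  info : I

/-- The g-value currently stored for a state. -/
noncomputable def gOf {S L I : Type} (c : AConfig S L I) (s : S) : NNReal :=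
  ((c.par s).map Prod.fst).getD 0

section DynAStar

variable {S L I : Type} (ts : TransSys S L) (σh : InfoSource ts I) (h : S → I → ℝ≥0∞)

/-- Updating the parent information along a transition `t` (the update of the
progression-based parent source σ_p): the target's pair becomes
`(g(origin)+cost, t)` unless the previously stored g-value is smaller. -/
noncomputable def parUpd (par : S → Option (NNReal × Option (Tran S L))) (t : Tran S L) :
    S → Option (NNReal × Option (Tran S L)) := fun x =>
  if x = t.2.2 then
    match par t.1 with
    | none => par t.2.2
    | some (g, _) =>
      match par t.2.2 with
      | none => some (g + ts.cost t.2.1, some t)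
      | some (g', p') =>
          if g + ts.cost t.2.1 ≤ g' then some (g + ts.cost t.2.1, some t)
          else some (g', p')
  else par x

/-- Processing one successor transition `t = (s, ℓ, s')` during the expansion of
`s`: record the old g-value (undefined iff `s'` unknown), update both information
objects along `t`, add `s'` to the known states, and insert `(s', g(s'), h(s'))`
into the open queue if `h(s') < ∞` and `s'` is new or reached more cheaply
(removing `s'` from closed in the latter case: reopening). -/
noncomputable def procSucc (c : AConfig S L I) (t : Tran S L) : AConfig S L I :=
  let oldg : Option NNReal := if t.2.2 ∈ c.known then some (gOf c t.2.2) else none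
  let par' := parUpd ts c.par t
  let info' := σh.update c.info t
  let c' : AConfig S L I :=
    { known := insert t.2.2 c.known, closed := c.closed, openq := c.openq,
      par := par', info := info' }
  let gnew : NNReal := ((par' t.2.2).map Prod.fst).getD 0
  let hnew : ℝ≥0∞ := h t.2.2 info'
  if hnew = ⊤ then c'
  else
    match oldg with
    | none => { c' with openq := (t.2.2, gnew, hnew) ::ₘ c.openq }
    | some go =>
      if gnew < go then
        { c' with closed := c.closed \ {t.2.2},
                  openq := (t.2.2, gnew, hnew) ::ₘ c.openq }
      else c'

/-- Expanding a state: process all its successor transitions in order. -/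
noncomputable def expandAll (c : AConfig S L I) (l : List (Tran S L)) : AConfig S L I :=
  l.foldl (procSucc ts σh h) c

/-- `l` enumerates (without repetition) exactly the transitions with origin `s`. -/
def SuccList (s : S) (l : List (Tran S L)) : Prop :=
  l.Nodup ∧ ∀ t : Tran S L, t ∈ l ↔ t ∈ ts.trans ∧ t.1 = s

/-- Labels recording what happened in one iteration of dynA*. -/
inductive ALab (S L : Type) where
  | dup (en : Entry S)
  | reev (en : Entry S)
  | expand (en : Entry S)
  | retGoal (en : Entry S) (π : List (Tran S L))
  | unsolv

/-- The entry popped from the open queue in an iteration, if any. -/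
def popped {S L : Type} : ALab S L → Option (Entry S)
  | .dup en => some en
  | .reev en => some en
  | .expand en => some en
  | .retGoal en _ => some en
  | .unsolv => none

/-- The outcome of one iteration of dynA*. -/
inductive AOut (S L I : Type) where
  | cont (c : AConfig S L I)
  | retPath (π : List (Tran S L))
  | unsolvable

/-- One iteration of dynA* (Algorithm 2), with optional re-evaluation.
An entry of minimal f-value is popped; duplicates (closed states) are discarded;
otherwise both information objects are refined on the popped state (σ_p's refine
is the identity, so `par` is unchanged); with `reeval` set, a state whose
heuristic value increased is re-inserted instead of expanded; expanding a goal
state returns the path obtained by following parent pointers; expanding a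
non-goal state processes all its successor transitions. If the open queue is
empty, 'unsolvable' is returned. -/
inductive AStep (reeval : Bool) : AConfig S L I → ALab S L → AOut S L I → Prop
  | dup {c : AConfig S L I} {en : Entry S} {rest : Multiset (Entry S)} :
      c.openq = en ::ₘ rest → (∀ en' ∈ c.openq, fval en ≤ fval en') →
      en.1 ∈ c.closed →
      AStep reeval c (.dup en) (.cont { c with openq := rest })
  | reevFin {c : AConfig S L I} {en : Entry S} {rest : Multiset (Entry S)} :
      c.openq = en ::ₘ rest → (∀ en' ∈ c.openq, fval en ≤ fval en') →
      en.1 ∉ c.closed → reeval = true →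
      en.2.2 < h en.1 (σh.refine c.info en.1) →
      h en.1 (σh.refine c.info en.1) ≠ ⊤ →
      AStep reeval c (.reev en)
        (.cont { c with info := σh.refine c.info en.1,
                        openq := (en.1, gOf c en.1, h en.1 (σh.refine c.info en.1)) ::ₘ rest })
  | reevInf {c : AConfig S L I} {en : Entry S} {rest : Multiset (Entry S)} :
      c.openq = en ::ₘ rest → (∀ en' ∈ c.openq, fval en ≤ fval en') →
      en.1 ∉ c.closed → reeval = true →
      en.2.2 < h en.1 (σh.refine c.info en.1) →
      h en.1 (σh.refine c.info en.1) = ⊤ →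
      AStep reeval c (.reev en)
        (.cont { c with info := σh.refine c.info en.1, openq := rest })
  | retGoal {c : AConfig S L I} {en : Entry S} {rest : Multiset (Entry S)}
      {π : List (Tran S L)} :
      c.openq = en ::ₘ rest → (∀ en' ∈ c.openq, fval en ≤ fval en') →
      en.1 ∉ c.closed →
      ¬(reeval = true ∧ en.2.2 < h en.1 (σh.refine c.info en.1)) →
      en.1 ∈ ts.goal → ParentChain c.par en.1 π →
      AStep reeval c (.retGoal en π) (.retPath π)
  | expand {c : AConfig S L I} {en : Entry S} {rest : Multiset (Entry S)}
      {l : List (Tran S L)} :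
      c.openq = en ::ₘ rest → (∀ en' ∈ c.openq, fval en ≤ fval en') →
      en.1 ∉ c.closed →
      ¬(reeval = true ∧ en.2.2 < h en.1 (σh.refine c.info en.1)) →
      en.1 ∉ ts.goal → SuccList ts en.1 l →
      AStep reeval c (.expand en)
        (.cont (expandAll ts σh h
          { c with openq := rest, closed := insert en.1 c.closed,
                   info := σh.refine c.info en.1 } l))
  | unsolv {c : AConfig S L I} :
      c.openq = 0 → AStep reeval c .unsolv .unsolvable

/-- The initial configuration of dynA*. -/
noncomputable def initAConfig : AConfig S L I where
  known := {ts.init}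
  closed := ∅
  openq :=
    if h ts.init σh.initInfo = ⊤ then 0 else {(ts.init, 0, h ts.init σh.initInfo)}
  par := fun x => if x = ts.init then some (0, none) else none
  info := σh.initInfo

/-- `IsExec ts σh h reeval e lab N`: `e 0, …, e N` are the configurations at the
beginnings of the iterations of an execution of dynA*, with `lab n` recording what
happened in iteration `n`. -/
def IsExec (reeval : Bool) (e : ℕ → AConfig S L I) (lab : ℕ → ALab S L) (N : ℕ) : Prop :=
  e 0 = initAConfig ts σh h ∧
  ∀ n < N, AStep ts σh h reeval (e n) (lab n) (.cont (e (n + 1)))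

/-- A state `s` is settled at iteration `n` if it was expanded in some earlier
iteration at whose beginning its stored g-value was `g*(s)`. -/
def SettledAt (e : ℕ → AConfig S L I) (lab : ℕ → ALab S L) (n : ℕ) (s : S) : Prop :=
  ∃ m < n, ∃ en : Entry S, lab m = .expand en ∧ en.1 = s ∧
    (gOf (e m) s : ℝ≥0∞) = ts.gstar s

/-- Iterated refinement of an information object on a fixed state. -/
def refIter (i : I) (s : S) : ℕ → I
  | 0 => i
  | n + 1 => σh.refine (refIter i s n) s

end DynAStar


/-! ## Auxiliary development -/

section Aux

variable {S L I : Type} {ts : TransSys S L} {σh : InfoSource ts I} {h : S → I → ℝ≥0∞}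

namespace TransSys

lemma IsPathFrom.append {s m e : S} {π π' : List (Tran S L)}
    (h1 : ts.IsPathFrom s π m) (h2 : ts.IsPathFrom m π' e) :
    ts.IsPathFrom s (π ++ π') e := by
  induction h1 with
  | nil => simpa using h2
  | cons ht _ ih => exact .cons ht (ih h2)

lemma pathCost_append (π π' : List (Tran S L)) :
    ts.pathCost (π ++ π') = ts.pathCost π + ts.pathCost π' := by
  simp [TransSys.pathCost]

lemma pathCost_cons (t : Tran S L) (π : List (Tran S L)) :
    ts.pathCost (t :: π) = ts.cost t.2.1 + ts.pathCost π := by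
  simp [TransSys.pathCost]

lemma hstar_le_pathCost {s g : S} {π : List (Tran S L)}
    (hp : ts.IsPathFrom s π g) (hg : g ∈ ts.goal) :
    ts.hstar s ≤ (ts.pathCost π : ℝ≥0∞) :=
  sInf_le ⟨π, g, hg, hp, rfl⟩

lemma hstar_goal_eq_zero {s : S} (hg : s ∈ ts.goal) : ts.hstar s = 0 :=
  le_antisymm (by simpa [TransSys.pathCost] using
    hstar_le_pathCost (ts := ts) (.nil s) hg) zero_le

lemma hstar_ne_top_of_path {s g : S} {π : List (Tran S L)}
    (hp : ts.IsPathFrom s π g) (hg : g ∈ ts.goal) : ts.hstar s ≠ ⊤ :=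
  fun htop => by
    have := hstar_le_pathCost hp hg
    rw [htop] at this
    exact (ENNReal.coe_ne_top (r := ts.pathCost π)) (top_le_iff.mp this)

end TransSys

/-- The global invariant maintained by dynA*, parametrized by a set `E` of
transitions from freshly closed states that have not been processed yet. -/
structure InvE (ts : TransSys S L) (σh : InfoSource ts I) (h : S → I → ℝ≥0∞)
    (E : Set (Tran S L)) (c : AConfig S L I) : Prop where
  q1 : ∀ s g, c.par s = some (g, none) → s = ts.init
  q2 : ∀ s g (t : Tran S L), c.par s = some (g, some t) →
        t ∈ ts.trans ∧ t.2.2 = s ∧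
        ∃ g' p', c.par t.1 = some (g', p') ∧ g' + ts.cost t.2.1 ≤ g
  z : ∃ p, c.par ts.init = some (0, p)
  k : ∀ s, s ∈ c.known ↔ c.par s ≠ none
  w : ∀ en ∈ c.openq, en.1 ∈ c.known
  gi : ∀ en ∈ c.openq, ∃ g p, c.par en.1 = some (g, p) ∧ g ≤ en.2.1
  r : σh.ReachWith c.info c.known
  ng : ∀ s ∈ c.closed, s ∉ ts.goal
  i2 : ∀ s ∈ c.closed, ts.hstar s ≠ ⊤ → ∀ t ∈ ts.trans, t.1 = s → t ∉ E →
        ∃ g p g' p', c.par s = some (g, p) ∧ c.par t.2.2 = some (g', p') ∧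
          g' ≤ g + ts.cost t.2.1
  cw : c.closed ⊆ c.known
  n : ∀ s ∈ c.known, ts.hstar s ≠ ⊤ →
        s ∈ c.closed ∨ ∃ en ∈ c.openq, en.1 = s ∧
          ∃ g p, c.par s = some (g, p) ∧ en.2.1 ≤ g ∧ en.2.2 ≤ ts.hstar s

abbrev AInv (ts : TransSys S L) (σh : InfoSource ts I) (h : S → I → ℝ≥0∞)
    (c : AConfig S L I) : Prop := InvE ts σh h ∅ c

/-- Soundness of parent chains. -/
lemma parentChain_sound {c : AConfig S L I} (hI : InvE ts σh h E c)
    {s : S} {π : List (Tran S L)} (hch : ParentChain c.par s π) :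
    ts.IsPathFrom ts.init π s ∧ ∃ g p, c.par s = some (g, p) ∧ ts.pathCost π ≤ g := by
  induction hch with
  | @nil s g hp =>
    have hs := hI.q1 _ _ hp
    subst hs
    exact ⟨.nil _, g, none, hp, by simp [TransSys.pathCost]⟩
  | @cons g t π hp _ ih =>
    obtain ⟨ht, -, g', p', hp', hle⟩ := hI.q2 _ _ _ hp
    obtain ⟨hpath, g₂, p₂, hp₂, hc₂⟩ := ih
    rw [hp'] at hp₂
    have hgg : g₂ = g' := (congrArg Prod.fst (Option.some.inj hp₂)).symm
    rw [hgg] at hc₂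
    refine ⟨hpath.append (by exact .cons (by exact ht) (.nil _)), g, some t, hp, ?_⟩
    rw [TransSys.pathCost_append]
    calc ts.pathCost π + ts.pathCost [t] = ts.pathCost π + ts.cost t.2.1 := by
          simp [TransSys.pathCost]
      _ ≤ g' + ts.cost t.2.1 := by exact add_le_add_left hc₂ _
      _ ≤ g := hle


lemma parUpd_ne {par : S → Option (NNReal × Option (Tran S L))} {t : Tran S L} {x : S}
    (hx : x ≠ t.2.2) : parUpd ts par t x = par x := by
  simp [parUpd, hx]

lemma parUpd_none {par : S → Option (NNReal × Option (Tran S L))} {t : Tran S L}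
    (hpar1 : par t.1 = none) : parUpd ts par t = par := by
  funext x
  by_cases hx : x = t.2.2
  · subst hx; simp [parUpd, hpar1]
  · exact parUpd_ne hx

lemma parUpd_tgt_spec {par : S → Option (NNReal × Option (Tran S L))} {t : Tran S L}
    {g₀ : NNReal} {p₀ : Option (Tran S L)} (hpar1 : par t.1 = some (g₀, p₀)) :
    ∃ gn pn, parUpd ts par t t.2.2 = some (gn, pn) ∧ gn ≤ g₀ + ts.cost t.2.1 ∧
      (∀ go po, par t.2.2 = some (go, po) → gn ≤ go) ∧
      ((parUpd ts par t t.2.2 = some (g₀ + ts.cost t.2.1, some t) ∧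
        ∀ go po, par t.2.2 = some (go, po) → g₀ + ts.cost t.2.1 ≤ go) ∨
       parUpd ts par t t.2.2 = par t.2.2) := by
  cases hv : par t.2.2 with
  | none =>
    refine ⟨g₀ + ts.cost t.2.1, some t, ?_, le_rfl, by simp [hv], Or.inl ⟨?_, by simp [hv]⟩⟩ <;>
      simp [parUpd, hpar1, hv]
  | some gp =>
    obtain ⟨go, po⟩ := gp
    by_cases hle : g₀ + ts.cost t.2.1 ≤ go
    · refine ⟨g₀ + ts.cost t.2.1, some t, ?_, le_rfl, ?_, Or.inl ⟨?_, ?_⟩⟩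
      · simp [parUpd, hpar1, hv, hle]
      · intro go' po' hv'
        have h2 : (go, po) = (go', po') := by
          first
            | exact Option.some.inj (hv.symm.trans hv')
            | exact Option.some.inj hv'
        exact le_of_le_of_eq hle (congrArg Prod.fst h2)
      · simp [parUpd, hpar1, hv, hle]
      · intro go' po' hv'
        have h2 : (go, po) = (go', po') := by
          first
            | exact Option.some.inj (hv.symm.trans hv')
            | exact Option.some.inj hv'
        exact le_of_le_of_eq hle (congrArg Prod.fst h2)
    · refine ⟨go, po, ?_, le_of_not_ge hle, ?_, Or.inr ?_⟩
      · simp [parUpd, hpar1, hv, hle]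
      · intro go' po' hv'
        have h2 : (go, po) = (go', po') := by
          first
            | exact Option.some.inj (hv.symm.trans hv')
            | exact Option.some.inj hv'
        exact le_of_eq (congrArg Prod.fst h2)
      · simp [parUpd, hpar1, hv, hle]

lemma procSucc_known (c : AConfig S L I) (t : Tran S L) :
    (procSucc ts σh h c t).known = insert t.2.2 c.known := by
  simp only [procSucc]
  split
  · rfl
  · split
    · rfl
    · split <;> rfl

lemma procSucc_par (c : AConfig S L I) (t : Tran S L) :
    (procSucc ts σh h c t).par = parUpd ts c.par t := by
  simp only [procSucc]
  split
  · rfl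
  · split
    · rfl
    · split <;> rfl

lemma procSucc_info (c : AConfig S L I) (t : Tran S L) :
    (procSucc ts σh h c t).info = σh.update c.info t := by
  simp only [procSucc]
  split
  · rfl
  · split
    · rfl
    · split <;> rfl

lemma procSucc_cases (c : AConfig S L I) (t : Tran S L) :
    (h t.2.2 (σh.update c.info t) = ⊤ ∧
      (procSucc ts σh h c t).closed = c.closed ∧
      (procSucc ts σh h c t).openq = c.openq) ∨
    (h t.2.2 (σh.update c.info t) ≠ ⊤ ∧ t.2.2 ∉ c.known ∧
      (procSucc ts σh h c t).closed = c.closed ∧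
      (procSucc ts σh h c t).openq =
        (t.2.2, ((parUpd ts c.par t t.2.2).map Prod.fst).getD 0,
          h t.2.2 (σh.update c.info t)) ::ₘ c.openq) ∨
    (h t.2.2 (σh.update c.info t) ≠ ⊤ ∧ t.2.2 ∈ c.known ∧
      ((parUpd ts c.par t t.2.2).map Prod.fst).getD 0 < gOf c t.2.2 ∧
      (procSucc ts σh h c t).closed = c.closed \ {t.2.2} ∧
      (procSucc ts σh h c t).openq =
        (t.2.2, ((parUpd ts c.par t t.2.2).map Prod.fst).getD 0,
          h t.2.2 (σh.update c.info t)) ::ₘ c.openq) ∨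
    (h t.2.2 (σh.update c.info t) ≠ ⊤ ∧ t.2.2 ∈ c.known ∧
      ¬ ((parUpd ts c.par t t.2.2).map Prod.fst).getD 0 < gOf c t.2.2 ∧
      (procSucc ts σh h c t).closed = c.closed ∧
      (procSucc ts σh h c t).openq = c.openq) := by
  by_cases hT : h t.2.2 (σh.update c.info t) = ⊤
  · exact Or.inl ⟨hT, by simp [procSucc, hT], by simp [procSucc, hT]⟩
  · by_cases hk : t.2.2 ∈ c.known
    · by_cases hlt : ((parUpd ts c.par t t.2.2).map Prod.fst).getD 0 < gOf c t.2.2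
      · refine Or.inr (Or.inr (Or.inl ⟨hT, hk, hlt, ?_, ?_⟩)) <;>
          simp [procSucc, hT, hk, hlt]
      · refine Or.inr (Or.inr (Or.inr ⟨hT, hk, hlt, ?_, ?_⟩)) <;>
          simp [procSucc, hT, hk, hlt]
    · refine Or.inr (Or.inl ⟨hT, hk, ?_, ?_⟩) <;> simp [procSucc, hT, hk] <;> rfl


lemma gOf_eq {c : AConfig S L I} {s : S} {g : NNReal} {p : Option (Tran S L)}
    (hp : c.par s = some (g, p)) : gOf c s = g := by
  simp only [gOf, hp, Option.map_some]
  rfl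

lemma procSucc_invE (hadm : DynAdmissible ts σh h) {E : Set (Tran S L)}
    {c : AConfig S L I} {t : Tran S L}
    (ht : t ∈ ts.trans) (hko : t.1 ∈ c.known) (hI : InvE ts σh h E c) :
    InvE ts σh h (E \ {t}) (procSucc ts σh h c t) := by
  classical
  have hne := (hI.k t.1).mp hko
  obtain ⟨⟨g₀, p₀⟩, hpar1⟩ : ∃ gp, c.par t.1 = some gp := by
    cases hv : c.par t.1 with
    | none => exact absurd hv hne
    | some gp => exact ⟨gp, rfl⟩
  obtain ⟨gn, pn, hsome, hgnle, hgnmin, hdisj⟩ := parUpd_tgt_spec (ts := ts) hpar1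
  have hK := procSucc_known (ts := ts) (σh := σh) (h := h) c t
  have hP := procSucc_par (ts := ts) (σh := σh) (h := h) c t
  have hInf := procSucc_info (ts := ts) (σh := σh) (h := h) c t
  have reach' : σh.ReachWith (σh.update c.info t) (insert t.2.2 c.known) :=
    .update hI.r ht hko
  have hadm' : ∀ s, h s (σh.update c.info t) ≤ ts.hstar s :=
    fun s => hadm s _ ⟨_, reach'⟩
  have helper : ∀ x g' p', c.par x = some (g', p') →
      ∃ g₂ p₂, parUpd ts c.par t x = some (g₂, p₂) ∧ g₂ ≤ g' := by
    intro x g' p' hx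
    by_cases hxt : x = t.2.2
    · subst hxt; exact ⟨gn, pn, hsome, hgnmin _ _ hx⟩
    · exact ⟨g', p', (parUpd_ne hxt).trans hx, le_rfl⟩
  have hq1 : ∀ s g, parUpd ts c.par t s = some (g, none) → s = ts.init := by
    intro s g hp
    by_cases hs : s = t.2.2
    · subst hs
      rcases hdisj with ⟨hnew, -⟩ | heq
      · have := hnew.symm.trans hp
        simp at this
      · exact hI.q1 _ _ (heq.symm.trans hp)
    · exact hI.q1 _ _ ((parUpd_ne hs).symm.trans hp)
  have hq2 : ∀ s g (t' : Tran S L), parUpd ts c.par t s = some (g, some t') →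
      t' ∈ ts.trans ∧ t'.2.2 = s ∧
      ∃ g' p', parUpd ts c.par t t'.1 = some (g', p') ∧ g' + ts.cost t'.2.1 ≤ g := by
    intro s g t' hp
    by_cases hs : s = t.2.2
    · subst hs
      rcases hdisj with ⟨hnew, hmin2⟩ | heq
      · have hpe := hnew.symm.trans hp
        have hpe' := Option.some.inj hpe
        have hg : g₀ + ts.cost t.2.1 = g := congrArg Prod.fst hpe'
        obtain rfl : t = t' := Option.some.inj (congrArg Prod.snd hpe')
        refine ⟨ht, rfl, ?_⟩
        by_cases h11 : t.1 = t.2.2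
        · have hc0 : c.par t.2.2 = some (g₀, p₀) := h11 ▸ hpar1
          refine ⟨gn, pn, h11 ▸ hsome, ?_⟩
          calc gn + ts.cost t.2.1 ≤ g₀ + ts.cost t.2.1 :=
                add_le_add_left (hgnmin _ _ hc0) _
            _ = g := hg
        · exact ⟨g₀, p₀, (parUpd_ne h11).trans hpar1, le_of_eq hg⟩
      · obtain ⟨ht'', he2, g', p', hq, hle⟩ := hI.q2 _ _ _ (heq.symm.trans hp)
        obtain ⟨g₂, p₂, hq₂, hle₂⟩ := helper _ _ _ hq
        exact ⟨ht'', he2, g₂, p₂, hq₂, le_trans (add_le_add_left hle₂ _) hle⟩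
    · obtain ⟨ht'', he2, g', p', hq, hle⟩ := hI.q2 _ _ _ ((parUpd_ne hs).symm.trans hp)
      obtain ⟨g₂, p₂, hq₂, hle₂⟩ := helper _ _ _ hq
      exact ⟨ht'', he2, g₂, p₂, hq₂, le_trans (add_le_add_left hle₂ _) hle⟩
  have hz : ∃ p, parUpd ts c.par t ts.init = some (0, p) := by
    obtain ⟨p, hz0⟩ := hI.z
    obtain ⟨g₂, p₂, h₂, hle₂⟩ := helper _ _ _ hz0
    have hg2 : g₂ = 0 := le_antisymm hle₂ zero_le
    exact ⟨p₂, by rw [h₂, hg2]⟩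
  have hk' : ∀ s, s ∈ insert t.2.2 c.known ↔ parUpd ts c.par t s ≠ none := by
    intro s
    by_cases hs : s = t.2.2
    · subst hs; simp [hsome]
    · rw [parUpd_ne hs]
      simp only [Set.mem_insert_iff, hs, false_or]
      exact hI.k s
  have hgneq : ((parUpd ts c.par t t.2.2).map Prod.fst).getD 0 = gn := by
    rw [hsome]; rfl
  have hw1 : ∀ en ∈ c.openq, en.1 ∈ insert t.2.2 c.known :=
    fun en hen => Set.mem_insert_iff.mpr (Or.inr (hI.w en hen))
  have hw2 : ∀ en ∈ (t.2.2, gn, h t.2.2 (σh.update c.info t)) ::ₘ c.openq,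
      en.1 ∈ insert t.2.2 c.known := by
    intro en hen
    rcases Multiset.mem_cons.mp hen with rfl | hen
    · exact Set.mem_insert _ _
    · exact hw1 en hen
  have hgi1 : ∀ en ∈ c.openq,
      ∃ g p, parUpd ts c.par t en.1 = some (g, p) ∧ g ≤ en.2.1 := by
    intro en hen
    obtain ⟨g, p, hpp, hle⟩ := hI.gi en hen
    obtain ⟨g₂, p₂, h₂, hle₂⟩ := helper _ _ _ hpp
    exact ⟨g₂, p₂, h₂, le_trans hle₂ hle⟩
  have hgi2 : ∀ en ∈ (t.2.2, gn, h t.2.2 (σh.update c.info t)) ::ₘ c.openq,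
      ∃ g p, parUpd ts c.par t en.1 = some (g, p) ∧ g ≤ en.2.1 := by
    intro en hen
    rcases Multiset.mem_cons.mp hen with rfl | hen
    · exact ⟨gn, pn, hsome, le_rfl⟩
    · exact hgi1 en hen
  have hi2new : ∀ s, t.1 = s →
      ∃ g p g' p', parUpd ts c.par t s = some (g, p) ∧
        parUpd ts c.par t t.2.2 = some (g', p') ∧ g' ≤ g + ts.cost t.2.1 := by
    intro s hs
    subst hs
    by_cases h11 : t.1 = t.2.2
    · exact ⟨gn, pn, gn, pn, h11 ▸ hsome, hsome, le_add_right le_rfl⟩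
    · exact ⟨g₀, p₀, gn, pn, (parUpd_ne h11).trans hpar1, hsome, hgnle⟩
  -- given the old i2 conclusion and preservation of the g-value at s,
  -- conclude the new i2 conclusion
  have hi2push : ∀ s (t' : Tran S L), t'.2.2 ∈ Set.univ →
      ∀ g p g' p', c.par s = some (g, p) → c.par t'.2.2 = some (g', p') →
      g' ≤ g + ts.cost t'.2.1 → (s = t.2.2 → gn = g) →
      ∃ g₂ p₂ g₂' p₂', parUpd ts c.par t s = some (g₂, p₂) ∧
        parUpd ts c.par t t'.2.2 = some (g₂', p₂') ∧ g₂' ≤ g₂ + ts.cost t'.2.1 := by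
    intro s t' _ g p g' p' hp1 hp2 hle hpres
    obtain ⟨g₂', p₂', hq₂, hle₂⟩ := helper _ _ _ hp2
    by_cases hs : s = t.2.2
    · subst hs
      refine ⟨gn, pn, g₂', p₂', hsome, hq₂, ?_⟩
      rw [hpres rfl]
      exact le_trans hle₂ hle
    · exact ⟨g, p, g₂', p₂', (parUpd_ne hs).trans hp1, hq₂,
        le_trans hle₂ hle⟩
  rcases procSucc_cases (ts := ts) (σh := σh) (h := h) c t with
    ⟨hT, hC, hQ⟩ | ⟨hT, hk2, hC, hQ⟩ | ⟨hT, hk2, hlt, hC, hQ⟩ | ⟨hT, hk2, hlt, hC, hQ⟩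
  -- Case A : h-value ⊤, nothing inserted
  · have htop : ts.hstar t.2.2 = ⊤ := top_le_iff.mp (hT ▸ hadm' t.2.2)
    refine ⟨?_, ?_, ?_, ?_, ?_, ?_, ?_, ?_, ?_, ?_, ?_⟩
    · rw [hP]; exact hq1
    · rw [hP]; exact hq2
    · rw [hP]; exact hz
    · rw [hP, hK]; exact hk'
    · rw [hK, hQ]; exact hw1
    · rw [hP, hQ]; exact hgi1
    · rw [hInf, hK]; exact reach'
    · rw [hC]; exact hI.ng
    · rw [hP, hC]
      intro s hscl hfin t' ht' ht'1 ht'E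
      by_cases htt : t' = t
      · subst htt; exact hi2new s ht'1
      · have ht'E2 : t' ∉ E := fun hmem => ht'E ⟨hmem, htt⟩
        obtain ⟨g, p, g', p', hp1, hp2, hle⟩ := hI.i2 s hscl hfin t' ht' ht'1 ht'E2
        refine hi2push s t' trivial g p g' p' hp1 hp2 hle ?_
        intro hs; subst hs
        exact absurd htop hfin
    · rw [hC, hK]; exact fun s hs => Set.mem_insert_iff.mpr (Or.inr (hI.cw hs))
    · rw [hP, hK, hC, hQ]
      intro s hskn hfin
      by_cases hs : s = t.2.2
      · subst hs; exact absurd htop hfin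
      · have hskn0 : s ∈ c.known := (Set.mem_insert_iff.mp hskn).resolve_left hs
        rcases hI.n s hskn0 hfin with hcl | ⟨en, hen, he1, g, p, hpp, hle1, hle2⟩
        · exact Or.inl hcl
        · exact Or.inr ⟨en, hen, he1, g, p, (parUpd_ne hs).trans hpp, hle1, hle2⟩
  -- Case B : new state generated and inserted
  · rw [hgneq] at hQ
    refine ⟨?_, ?_, ?_, ?_, ?_, ?_, ?_, ?_, ?_, ?_, ?_⟩
    · rw [hP]; exact hq1
    · rw [hP]; exact hq2
    · rw [hP]; exact hz
    · rw [hP, hK]; exact hk'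
    · rw [hK, hQ]; exact hw2
    · rw [hP, hQ]; exact hgi2
    · rw [hInf, hK]; exact reach'
    · rw [hC]; exact hI.ng
    · rw [hP, hC]
      intro s hscl hfin t' ht' ht'1 ht'E
      by_cases htt : t' = t
      · subst htt; exact hi2new s ht'1
      · have ht'E2 : t' ∉ E := fun hmem => ht'E ⟨hmem, htt⟩
        obtain ⟨g, p, g', p', hp1, hp2, hle⟩ := hI.i2 s hscl hfin t' ht' ht'1 ht'E2
        refine hi2push s t' trivial g p g' p' hp1 hp2 hle ?_
        intro hs; subst hs
        exact absurd (hI.cw hscl) hk2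
    · rw [hC, hK]; exact fun s hs => Set.mem_insert_iff.mpr (Or.inr (hI.cw hs))
    · rw [hP, hK, hC, hQ]
      intro s hskn hfin
      by_cases hs : s = t.2.2
      · subst hs
        exact Or.inr ⟨(t.2.2, gn, h t.2.2 (σh.update c.info t)),
          Multiset.mem_cons_self _ _, rfl, gn, pn, hsome, le_rfl, hadm' _⟩
      · have hskn0 : s ∈ c.known := (Set.mem_insert_iff.mp hskn).resolve_left hs
        rcases hI.n s hskn0 hfin with hcl | ⟨en, hen, he1, g, p, hpp, hle1, hle2⟩
        · exact Or.inl hcl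
        · exact Or.inr ⟨en, Multiset.mem_cons_of_mem hen, he1, g, p,
            (parUpd_ne hs).trans hpp, hle1, hle2⟩
  -- Case C : reached more cheaply, reopened and inserted
  · rw [hgneq] at hQ hlt
    refine ⟨?_, ?_, ?_, ?_, ?_, ?_, ?_, ?_, ?_, ?_, ?_⟩
    · rw [hP]; exact hq1
    · rw [hP]; exact hq2
    · rw [hP]; exact hz
    · rw [hP, hK]; exact hk'
    · rw [hK, hQ]; exact hw2
    · rw [hP, hQ]; exact hgi2
    · rw [hInf, hK]; exact reach'
    · rw [hC]; exact fun s hs => hI.ng s hs.1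
    · rw [hP, hC]
      intro s hscl hfin t' ht' ht'1 ht'E
      by_cases htt : t' = t
      · subst htt; exact hi2new s ht'1
      · have ht'E2 : t' ∉ E := fun hmem => ht'E ⟨hmem, htt⟩
        obtain ⟨g, p, g', p', hp1, hp2, hle⟩ := hI.i2 s hscl.1 hfin t' ht' ht'1 ht'E2
        refine hi2push s t' trivial g p g' p' hp1 hp2 hle ?_
        intro hs
        exact absurd (Set.mem_singleton _) (hs ▸ hscl.2)
    · rw [hC, hK]
      exact fun s hs => Set.mem_insert_iff.mpr (Or.inr (hI.cw hs.1))
    · rw [hP, hK, hC, hQ]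
      intro s hskn hfin
      by_cases hs : s = t.2.2
      · subst hs
        exact Or.inr ⟨(t.2.2, gn, h t.2.2 (σh.update c.info t)),
          Multiset.mem_cons_self _ _, rfl, gn, pn, hsome, le_rfl, hadm' _⟩
      · have hskn0 : s ∈ c.known := (Set.mem_insert_iff.mp hskn).resolve_left hs
        rcases hI.n s hskn0 hfin with hcl | ⟨en, hen, he1, g, p, hpp, hle1, hle2⟩
        · exact Or.inl ⟨hcl, by simp [hs]⟩
        · exact Or.inr ⟨en, Multiset.mem_cons_of_mem hen, he1, g, p,
            (parUpd_ne hs).trans hpp, hle1, hle2⟩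
  -- Case D : not reached more cheaply, nothing inserted
  · rw [hgneq] at hlt
    have hko2 := (hI.k t.2.2).mp hk2
    obtain ⟨⟨go, po⟩, hpo⟩ : ∃ gp, c.par t.2.2 = some gp := by
      cases hv : c.par t.2.2 with
      | none => exact absurd hv hko2
      | some gp => exact ⟨gp, rfl⟩
    have hgo : gOf c t.2.2 = go := gOf_eq hpo
    have hgngo : gn = go :=
      le_antisymm (hgnmin _ _ hpo) (not_lt.mp (hgo ▸ hlt))
    refine ⟨?_, ?_, ?_, ?_, ?_, ?_, ?_, ?_, ?_, ?_, ?_⟩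
    · rw [hP]; exact hq1
    · rw [hP]; exact hq2
    · rw [hP]; exact hz
    · rw [hP, hK]; exact hk'
    · rw [hK, hQ]; exact hw1
    · rw [hP, hQ]; exact hgi1
    · rw [hInf, hK]; exact reach'
    · rw [hC]; exact hI.ng
    · rw [hP, hC]
      intro s hscl hfin t' ht' ht'1 ht'E
      by_cases htt : t' = t
      · subst htt; exact hi2new s ht'1
      · have ht'E2 : t' ∉ E := fun hmem => ht'E ⟨hmem, htt⟩
        obtain ⟨g, p, g', p', hp1, hp2, hle⟩ := hI.i2 s hscl hfin t' ht' ht'1 ht'E2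
        refine hi2push s t' trivial g p g' p' hp1 hp2 hle ?_
        intro hs
        subst hs
        rw [hpo] at hp1
        rw [hgngo]
        exact congrArg Prod.fst (Option.some.inj hp1)
    · rw [hC, hK]; exact fun s hs => Set.mem_insert_iff.mpr (Or.inr (hI.cw hs))
    · rw [hP, hK, hC, hQ]
      intro s hskn hfin
      by_cases hs : s = t.2.2
      · subst hs
        rcases hI.n _ hk2 hfin with hcl | ⟨en, hen, he1, g, p, hpp, hle1, hle2⟩
        · exact Or.inl hcl
        · have hg : go = g := congrArg Prod.fst (Option.some.inj (hpo.symm.trans hpp))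
          exact Or.inr ⟨en, hen, he1, gn, pn, hsome, by rw [hgngo, hg]; exact hle1, hle2⟩
      · have hskn0 : s ∈ c.known := (Set.mem_insert_iff.mp hskn).resolve_left hs
        rcases hI.n s hskn0 hfin with hcl | ⟨en, hen, he1, g, p, hpp, hle1, hle2⟩
        · exact Or.inl hcl
        · exact Or.inr ⟨en, hen, he1, g, p, (parUpd_ne hs).trans hpp, hle1, hle2⟩


lemma invE_mono {E E' : Set (Tran S L)} {c : AConfig S L I} (hEE : E ⊆ E')
    (hI : InvE ts σh h E c) : InvE ts σh h E' c :=
  ⟨hI.q1, hI.q2, hI.z, hI.k, hI.w, hI.gi, hI.r, hI.ng,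
    fun s hs hfin t ht ht1 htE => hI.i2 s hs hfin t ht ht1 (fun hx => htE (hEE hx)),
    hI.cw, hI.n⟩

lemma expandAll_inv (hadm : DynAdmissible ts σh h) :
    ∀ (l : List (Tran S L)) (c : AConfig S L I) (s₀ : S),
      (∀ t ∈ l, t ∈ ts.trans ∧ t.1 = s₀) → s₀ ∈ c.known →
      InvE ts σh h {x | x ∈ l} c → AInv ts σh h (expandAll ts σh h c l) := by
  intro l
  induction l with
  | nil =>
    intro c s₀ _ _ hI
    exact invE_mono (by intro x hx; exact absurd hx (by simp)) hI
  | cons t l' ih =>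
    intro c s₀ hl hs₀ hI
    obtain ⟨ht, ht1⟩ := hl t List.mem_cons_self
    have hstep := procSucc_invE (σh := σh) (h := h) hadm ht (ht1 ▸ hs₀) hI
    have hmono : {x | x ∈ t :: l'} \ {t} ⊆ {x | x ∈ l'} := by
      rintro x ⟨hx1, hx2⟩
      rcases List.mem_cons.mp hx1 with rfl | hx
      · exact absurd rfl hx2
      · exact hx
    have hkn' : s₀ ∈ (procSucc ts σh h c t).known := by
      rw [procSucc_known]; exact Set.mem_insert_iff.mpr (Or.inr hs₀)
    exact ih (procSucc ts σh h c t) s₀ (fun t' ht' => hl t' (List.mem_cons_of_mem _ ht'))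
      hkn' (invE_mono hmono hstep)

lemma astep_inv (hadm : DynAdmissible ts σh h) {reeval : Bool}
    {c c' : AConfig S L I} {lb : ALab S L}
    (hI : AInv ts σh h c) (hs : AStep ts σh h reeval c lb (.cont c')) :
    AInv ts σh h c' := by
  cases hs with
  | dup hq hmin hcl =>
    rename_i en rest
    refine ⟨hI.q1, hI.q2, hI.z, hI.k, ?_, ?_, hI.r, hI.ng, hI.i2, hI.cw, ?_⟩
    · exact fun en' hen' => hI.w en' (by rw [hq]; exact Multiset.mem_cons_of_mem hen')
    · exact fun en' hen' => hI.gi en' (by rw [hq]; exact Multiset.mem_cons_of_mem hen')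
    · intro s hskn hfin
      rcases hI.n s hskn hfin with hclm | ⟨en₂, hen₂, he1, g, p, hpp, hle1, hle2⟩
      · exact Or.inl hclm
      · rw [hq] at hen₂
        rcases Multiset.mem_cons.mp hen₂ with rfl | hen₂'
        · exact Or.inl (he1 ▸ hcl)
        · exact Or.inr ⟨en₂, hen₂', he1, g, p, hpp, hle1, hle2⟩
  | reevFin hq hmin hncl hre hlt hnt =>
    rename_i en rest
    have hen0 : en ∈ c.openq := by rw [hq]; exact Multiset.mem_cons_self _ _
    have hkn : en.1 ∈ c.known := hI.w en hen0
    have reach' : σh.ReachWith (σh.refine c.info en.1) c.known := .refine hI.r hkn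
    have hadm' : ∀ s, h s (σh.refine c.info en.1) ≤ ts.hstar s :=
      fun s => hadm s _ ⟨_, reach'⟩
    obtain ⟨g, p, hpp, hle⟩ := hI.gi en hen0
    have hgOf : gOf c en.1 = g := gOf_eq hpp
    refine ⟨hI.q1, hI.q2, hI.z, hI.k, ?_, ?_, reach', hI.ng, hI.i2, hI.cw, ?_⟩
    · intro en' hen'
      rcases Multiset.mem_cons.mp hen' with rfl | hen''
      · exact hkn
      · exact hI.w en' (by rw [hq]; exact Multiset.mem_cons_of_mem hen'')
    · intro en' hen'
      rcases Multiset.mem_cons.mp hen' with rfl | hen''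
      · exact ⟨g, p, hpp, le_of_eq hgOf.symm⟩
      · exact hI.gi en' (by rw [hq]; exact Multiset.mem_cons_of_mem hen'')
    · intro s hskn hfin
      rcases hI.n s hskn hfin with hclm | ⟨en₂, hen₂, he1, g₂, p₂, hpp₂, hle1, hle2⟩
      · exact Or.inl hclm
      · rw [hq] at hen₂
        rcases Multiset.mem_cons.mp hen₂ with rfl | hen₂'
        · subst he1
          refine Or.inr ⟨(en₂.1, gOf c en₂.1, h en₂.1 (σh.refine c.info en₂.1)),
            Multiset.mem_cons_self _ _, rfl, g₂, p₂, hpp₂, ?_, hadm' _⟩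
          exact le_of_eq (gOf_eq hpp₂)
        · exact Or.inr ⟨en₂, Multiset.mem_cons_of_mem hen₂', he1, g₂, p₂, hpp₂, hle1, hle2⟩
  | reevInf hq hmin hncl hre hlt htop =>
    rename_i en rest
    have hen0 : en ∈ c.openq := by rw [hq]; exact Multiset.mem_cons_self _ _
    have hkn : en.1 ∈ c.known := hI.w en hen0
    have reach' : σh.ReachWith (σh.refine c.info en.1) c.known := .refine hI.r hkn
    have hadm' : ∀ s, h s (σh.refine c.info en.1) ≤ ts.hstar s :=
      fun s => hadm s _ ⟨_, reach'⟩
    refine ⟨hI.q1, hI.q2, hI.z, hI.k, ?_, ?_, reach', hI.ng, hI.i2, hI.cw, ?_⟩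
    · exact fun en' hen' => hI.w en' (by rw [hq]; exact Multiset.mem_cons_of_mem hen')
    · exact fun en' hen' => hI.gi en' (by rw [hq]; exact Multiset.mem_cons_of_mem hen')
    · intro s hskn hfin
      rcases hI.n s hskn hfin with hclm | ⟨en₂, hen₂, he1, g₂, p₂, hpp₂, hle1, hle2⟩
      · exact Or.inl hclm
      · rw [hq] at hen₂
        rcases Multiset.mem_cons.mp hen₂ with rfl | hen₂'
        · subst he1
          have : ts.hstar en₂.1 = ⊤ := top_le_iff.mp (htop ▸ hadm' en₂.1)
          exact absurd this hfin
        · exact Or.inr ⟨en₂, hen₂', he1, g₂, p₂, hpp₂, hle1, hle2⟩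
  | expand hq hmin hncl hnre hngoal hsl =>
    rename_i en rest l
    have hen0 : en ∈ c.openq := by rw [hq]; exact Multiset.mem_cons_self _ _
    have hkn : en.1 ∈ c.known := hI.w en hen0
    have reach' : σh.ReachWith (σh.refine c.info en.1) c.known := .refine hI.r hkn
    refine expandAll_inv hadm l _ en.1 (fun t' ht' => (hsl.2 t').mp ht') hkn ?_
    refine ⟨hI.q1, hI.q2, hI.z, hI.k, ?_, ?_, reach', ?_, ?_, ?_, ?_⟩
    · exact fun en' hen' => hI.w en' (by rw [hq]; exact Multiset.mem_cons_of_mem hen')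
    · exact fun en' hen' => hI.gi en' (by rw [hq]; exact Multiset.mem_cons_of_mem hen')
    · intro s hscl
      rcases Set.mem_insert_iff.mp hscl with rfl | hs
      · exact hngoal
      · exact hI.ng s hs
    · intro s hscl hfin t' ht' ht'1 ht'nE
      rcases Set.mem_insert_iff.mp hscl with rfl | hs
      · exact absurd ((hsl.2 t').mpr ⟨ht', ht'1⟩) ht'nE
      · exact hI.i2 s hs hfin t' ht' ht'1 (Set.notMem_empty t')
    · intro s hscl
      rcases Set.mem_insert_iff.mp hscl with rfl | hs
      · exact hkn
      · exact hI.cw hs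
    · intro s hskn hfin
      rcases hI.n s hskn hfin with hclm | ⟨en₂, hen₂, he1, g₂, p₂, hpp₂, hle1, hle2⟩
      · exact Or.inl (Set.mem_insert_iff.mpr (Or.inr hclm))
      · rw [hq] at hen₂
        rcases Multiset.mem_cons.mp hen₂ with rfl | hen₂'
        · exact Or.inl (he1 ▸ Set.mem_insert _ _)
        · exact Or.inr ⟨en₂, hen₂', he1, g₂, p₂, hpp₂, hle1, hle2⟩

lemma init_inv (hadm : DynAdmissible ts σh h) :
    AInv ts σh h (initAConfig ts σh h) := by
  classical
  have hreach : σh.ReachableInfo σh.initInfo := ⟨_, .base⟩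
  refine ⟨?_, ?_, ?_, ?_, ?_, ?_, ?_, ?_, ?_, ?_, ?_⟩
  · intro s g hp
    by_cases hs : s = ts.init
    · exact hs
    · simp [initAConfig, hs] at hp
  · intro s g t' hp
    by_cases hs : s = ts.init
    · subst hs; simp [initAConfig] at hp
    · simp [initAConfig, hs] at hp
  · exact ⟨none, by simp [initAConfig]⟩
  · intro s
    by_cases hs : s = ts.init <;> simp [initAConfig, hs]
  · intro en hen
    by_cases hT : h ts.init σh.initInfo = ⊤
    · simp [initAConfig, hT] at hen
    · simp only [initAConfig, if_neg hT] at hen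
      rw [Multiset.mem_singleton.mp hen]
      simp [initAConfig]
  · intro en hen
    by_cases hT : h ts.init σh.initInfo = ⊤
    · simp [initAConfig, hT] at hen
    · simp only [initAConfig, if_neg hT] at hen
      rw [Multiset.mem_singleton.mp hen]
      exact ⟨0, none, by simp [initAConfig], le_rfl⟩
  · exact InfoSource.ReachWith.base
  · intro s hs; simp [initAConfig] at hs
  · intro s hs; simp [initAConfig] at hs
  · intro s hs; simp [initAConfig] at hs
  · intro s hskn hfin
    have hs : s = ts.init := by simpa [initAConfig] using hskn
    subst hs
    by_cases hT : h ts.init σh.initInfo = ⊤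
    · exact absurd (top_le_iff.mp (hT ▸ hadm ts.init σh.initInfo hreach)) hfin
    · refine Or.inr ⟨(ts.init, 0, h ts.init σh.initInfo), ?_, rfl, 0, none,
        by simp [initAConfig], le_rfl, hadm ts.init σh.initInfo hreach⟩
      simp [initAConfig, hT]

lemma exec_inv (hadm : DynAdmissible ts σh h) {reeval : Bool}
    {e : ℕ → AConfig S L I} {lab : ℕ → ALab S L} {N : ℕ}
    (hex : IsExec ts σh h reeval e lab N) : ∀ n ≤ N, AInv ts σh h (e n) := by
  intro n
  induction n with
  | zero => intro _; rw [hex.1]; exact init_inv hadm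
  | succ n ih =>
    intro hle
    exact astep_inv hadm (ih (Nat.le_of_succ_le hle)) (hex.2 n (Nat.lt_of_succ_le hle))

lemma reach_open {c : AConfig S L I} (hI : AInv ts σh h c)
    {π : List (Tran S L)} {s gl : S} (hp : ts.IsPathFrom s π gl) :
    gl ∈ ts.goal →
    ∀ B : NNReal,
      ((s ∈ c.closed ∧ ∃ g p, c.par s = some (g, p) ∧ g ≤ B) ∨
       (∃ en ∈ c.openq, en.1 = s ∧ en.2.1 ≤ B ∧ en.2.2 ≤ ts.hstar s)) →
      ∃ en ∈ c.openq, fval en ≤ (B : ℝ≥0∞) + (ts.pathCost π : ℝ≥0∞) := by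
  induction hp with
  | nil s' =>
    intro hgl B hstart
    rcases hstart with ⟨hcl, -⟩ | ⟨en, hen, he1, hg, hh⟩
    · exact absurd hgl (hI.ng _ hcl)
    · refine ⟨en, hen, ?_⟩
      have h0 : ts.hstar s' = 0 := TransSys.hstar_goal_eq_zero hgl
      calc fval en = (en.2.1 : ℝ≥0∞) + en.2.2 := rfl
        _ ≤ (B : ℝ≥0∞) + 0 := add_le_add (ENNReal.coe_le_coe.mpr hg) (le_trans hh (le_of_eq h0))
        _ ≤ (B : ℝ≥0∞) + (ts.pathCost [] : ℝ≥0∞) := by simp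
  | @cons s' m e' lb π' ht hp' ih =>
    intro hgl B hstart
    have hcostc : (ts.pathCost ((s', lb, m) :: π') : ℝ≥0∞) =
        (ts.cost lb : ℝ≥0∞) + (ts.pathCost π' : ℝ≥0∞) := by
      rw [TransSys.pathCost_cons]; push_cast; rfl
    rcases hstart with ⟨hcl, g, p, hpp, hgB⟩ | ⟨en, hen, he1, hg, hh⟩
    · have hfin : ts.hstar s' ≠ ⊤ := TransSys.hstar_ne_top_of_path (.cons ht hp') hgl
      obtain ⟨g₂, p₂, g₂', p₂', hp1, hp2, hle⟩ :=
        hI.i2 s' hcl hfin (s', lb, m) ht rfl (Set.notMem_empty _)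
      have hg2 : g₂ = g := congrArg Prod.fst (Option.some.inj (hp1.symm.trans hpp))
      have hstep : g₂' ≤ B + ts.cost lb := by
        refine le_trans hle ?_
        rw [hg2]
        exact add_le_add_left hgB _
      have hfin2 : ts.hstar m ≠ ⊤ := TransSys.hstar_ne_top_of_path hp' hgl
      have hmkn : m ∈ c.known := (hI.k m).mpr (by rw [hp2]; simp)
      have hstart' :
          (m ∈ c.closed ∧ ∃ g p, c.par m = some (g, p) ∧ g ≤ B + ts.cost lb) ∨
          (∃ en ∈ c.openq, en.1 = m ∧ en.2.1 ≤ B + ts.cost lb ∧ en.2.2 ≤ ts.hstar m) := by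
        rcases hI.n m hmkn hfin2 with hclm | ⟨en₂, hen₂, he1, g₃, p₃, hpp₃, hle1, hle2⟩
        · exact Or.inl ⟨hclm, g₂', p₂', hp2, hstep⟩
        · have hg3 : g₃ = g₂' := congrArg Prod.fst (Option.some.inj (hpp₃.symm.trans hp2))
          exact Or.inr ⟨en₂, hen₂, he1, le_trans hle1 (le_of_le_of_eq (le_of_eq hg3) rfl |>.trans hstep), hle2⟩
      obtain ⟨en₃, hen₃, hf₃⟩ := ih hgl (B + ts.cost lb) hstart'
      refine ⟨en₃, hen₃, le_trans hf₃ ?_⟩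
      rw [hcostc]
      push_cast
      rw [← add_assoc]
    · refine ⟨en, hen, ?_⟩
      have h1 : ts.hstar s' ≤ (ts.pathCost ((s', lb, m) :: π') : ℝ≥0∞) :=
        TransSys.hstar_le_pathCost (.cons ht hp') hgl
      calc fval en = (en.2.1 : ℝ≥0∞) + en.2.2 := rfl
        _ ≤ (B : ℝ≥0∞) + (ts.pathCost ((s', lb, m) :: π') : ℝ≥0∞) :=
          add_le_add (ENNReal.coe_le_coe.mpr hg) (le_trans hh (he1 ▸ h1))

end Aux

/-! ## Statement 11 -/


theorem stmt11 {S L I : Type} [Fintype S] [Fintype L]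
    (ts : TransSys S L) (σh : InfoSource ts I) (h : S → I → ℝ≥0∞)
    (hadm : DynAdmissible ts σh h) (reeval : Bool)
    (e : ℕ → AConfig S L I) (lab : ℕ → ALab S L) (N : ℕ)
    (hexec : IsExec ts σh h reeval e lab N)
    (l : ALab S L) (π : List (Tran S L))
    (hret : AStep ts σh h reeval (e N) l (AOut.retPath π)) :
    ts.Solution π ∧ (ts.pathCost π : ℝ≥0∞) = ts.hstar ts.init := by
  classical
  have hIN : AInv ts σh h (e N) := exec_inv hadm hexec N le_rfl
  cases hret with
  | retGoal hq hmin hncl hnre hgoal hchain =>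
    rename_i en rest
    obtain ⟨hpath, g, p, hpp, hcost⟩ := parentChain_sound hIN hchain
    have hsol : ts.Solution π := ⟨en.1, hgoal, hpath⟩
    have hen0 : en ∈ (e N).openq := by rw [hq]; exact Multiset.mem_cons_self _ _
    obtain ⟨g₂, p₂, hpp₂, hle₂⟩ := hIN.gi en hen0
    have hgg : g₂ = g := congrArg Prod.fst (Option.some.inj (hpp₂.symm.trans hpp))
    have h1 : (ts.pathCost π : ℝ≥0∞) ≤ fval en := by
      calc (ts.pathCost π : ℝ≥0∞) ≤ (g : ℝ≥0∞) := ENNReal.coe_le_coe.mpr hcost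
        _ ≤ (en.2.1 : ℝ≥0∞) := ENNReal.coe_le_coe.mpr (hgg ▸ hle₂)
        _ ≤ (en.2.1 : ℝ≥0∞) + en.2.2 := le_self_add
        _ = fval en := rfl
    have h2 : fval en ≤ ts.hstar ts.init := by
      apply le_sInf
      rintro x ⟨ρ, gl, hgl, hρ, rfl⟩
      obtain ⟨p₀, hz⟩ := hIN.z
      have hknI : ts.init ∈ (e N).known := (hIN.k _).mpr (by rw [hz]; simp)
      have hfinI : ts.hstar ts.init ≠ ⊤ := TransSys.hstar_ne_top_of_path hρ hgl
      have hstart :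
          (ts.init ∈ (e N).closed ∧ ∃ g p, (e N).par ts.init = some (g, p) ∧ g ≤ 0) ∨
          (∃ en' ∈ (e N).openq, en'.1 = ts.init ∧ en'.2.1 ≤ 0 ∧
            en'.2.2 ≤ ts.hstar ts.init) := by
        rcases hIN.n _ hknI hfinI with hcl | ⟨en₂, hen₂, he1, g₃, p₃, hpp₃, hle1, hle2⟩
        · exact Or.inl ⟨hcl, 0, p₀, hz, le_rfl⟩
        · have hg3 : g₃ = 0 := congrArg Prod.fst (Option.some.inj (hpp₃.symm.trans hz))
          exact Or.inr ⟨en₂, hen₂, he1, hg3 ▸ hle1, hle2⟩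
      obtain ⟨en₃, hen₃, hf₃⟩ := reach_open hIN hρ hgl 0 hstart
      calc fval en ≤ fval en₃ := hmin en₃ hen₃
        _ ≤ ((0 : NNReal) : ℝ≥0∞) + (ts.pathCost ρ : ℝ≥0∞) := hf₃
        _ = (ts.pathCost ρ : ℝ≥0∞) := by simp
    have h3 : ts.hstar ts.init ≤ (ts.pathCost π : ℝ≥0∞) :=
      TransSys.hstar_le_pathCost hpath hgoal
    exact ⟨hsol, le_antisymm (le_trans h1 h2) h3⟩
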